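/- arXiv:2503.06429 — 2 statements merged into one kernel-verified Lean document; each statement's English description precedes it below -/
import Mathlib

section
/- Let N ⊴ M be finite groups, θ an irreducible character of N and χ an irreducible character of M such that χ_N = eθ and θ^M = eχ for some positive integer e. Then e² = |M : N| and χ vanishes on M ∖ N. -/
open scoped BigOperators Classical

def IsChar (G : Type) [Group G] (f : G → ℂ) : Prop :=
  ∃ V : FDRep ℂ G, f = V.character

def IsIrrChar (G : Type) [Group G] (f : G → ℂ) : Prop :=
  ∃ V : FDRep ℂ G, CategoryTheory.Simple V ∧ f = V.character

noncomputable def charInner (H : Type*) [Group H] [Fintype H] (f g : H → ℂ) : ℂ :=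
  (Fintype.card H : ℂ)⁻¹ * ∑ h : H, f h * starRingEnd ℂ (g h)

noncomputable def indChar {G : Type*} [Group G] [Fintype G] (U : Subgroup G) (f : U → ℂ) : G → ℂ :=
  fun g => (Nat.card U : ℂ)⁻¹ * ∑ x : G, if h : x * g * x⁻¹ ∈ U then f ⟨x * g * x⁻¹, h⟩ else 0

def conjChar {G : Type*} [Group G] (N : Subgroup G) [hN : N.Normal] (g : G) (θ : N → ℂ) : N → ℂ :=
  fun n => θ ⟨g * n * g⁻¹, hN.conj_mem n n.2 g⟩

lemma irr_one_ne_zero {G : Type} [Group G] {θ : G → ℂ} (hθ : IsIrrChar G θ) : θ 1 ≠ 0 := by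
  obtain ⟨V, hV, rfl⟩ := hθ
  rw [FDRep.char_one]
  norm_cast
  intro h
  have hs : Subsingleton V := Module.finrank_zero_iff.mp h
  apply CategoryTheory.id_nonzero V
  ext x
  exact @Subsingleton.elim _ hs _ _

/-- Fully ramified characters: if `N ⊴ M`, `θ ∈ Irr(N)`, `χ ∈ Irr(M)`, `χ_N = e·θ` and
`θ^M = e·χ` for a positive integer `e`, then `e² = |M : N|` and `χ` vanishes on `M ∖ N`. -/
theorem fully_ramified_index_and_vanishing (M : Type) [Group M] [Fintype M]
    (N : Subgroup M) [N.Normal] (θ : N → ℂ) (χ : M → ℂ) (e : ℕ) (he : 0 < e)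
    (hθ : IsIrrChar N θ) (hχ : IsIrrChar M χ)
    (hres : ∀ n : N, χ n = (e : ℂ) * θ n)
    (hind : ∀ m : M, indChar N θ m = (e : ℂ) * χ m) :
    e ^ 2 = N.index ∧ ∀ m : M, m ∉ N → χ m = 0 := by
  have hθ1 : θ 1 ≠ 0 := irr_one_ne_zero hθ
  constructor
  · -- evaluate hind at 1
    have h1 := hind 1
    have hL : indChar N θ 1 = (Nat.card N : ℂ)⁻¹ * (Fintype.card M : ℂ) * θ 1 := by
      unfold indChar
      have : ∀ x : M, (if h : x * 1 * x⁻¹ ∈ N then θ ⟨x * 1 * x⁻¹, h⟩ else 0) = θ 1 := by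
        intro x
        have hx : x * 1 * x⁻¹ = 1 := by group
        rw [dif_pos (by rw [hx]; exact N.one_mem)]
        congr 1
        exact Subtype.ext hx
      simp only [this, Finset.sum_const, Finset.card_univ, nsmul_eq_mul]
      ring
    have hχ1 : χ (1 : M) = (e : ℂ) * θ 1 := by
      have := hres 1
      simpa using this
    -- now: (Nat.card N)⁻¹ * card M * θ 1 = e * χ 1 = e * (e * θ 1)
    have key : (Nat.card N : ℂ)⁻¹ * (Fintype.card M : ℂ) = (e : ℂ) ^ 2 := by
      have h2 : (Nat.card N : ℂ)⁻¹ * (Fintype.card M : ℂ) * θ 1 = (e : ℂ) ^ 2 * θ 1 := by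
        rw [hL] at h1; rw [h1, hχ1]; ring
      exact mul_right_cancel₀ hθ1 h2
    have hN0 : (Nat.card N : ℂ) ≠ 0 := by
      have : 0 < Nat.card N := Nat.card_pos
      exact_mod_cast this.ne'
    have hcard : (Fintype.card M : ℂ) = (e : ℂ) ^ 2 * (Nat.card N : ℂ) := by
      rw [← key]; field_simp
    have hidx : N.index * Nat.card N = Fintype.card M := by
      rw [← Nat.card_eq_fintype_card]
      exact Subgroup.index_mul_card N
    have hthis : ((N.index : ℕ) : ℂ) * (Nat.card N : ℂ) = (e:ℂ) ^ 2 * (Nat.card N : ℂ) := by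
      rw [← hcard, ← hidx]; push_cast; ring
    have hfin : (e : ℂ) ^ 2 = (N.index : ℂ) := (mul_right_cancel₀ hN0 hthis).symm
    exact_mod_cast hfin
  · intro m hm
    have h := hind m
    have hL : indChar N θ m = 0 := by
      unfold indChar
      have : ∀ x : M, (if h : x * m * x⁻¹ ∈ N then θ ⟨x * m * x⁻¹, h⟩ else 0) = 0 := by
        intro x
        rw [dif_neg]
        intro hx
        apply hm
        have := Subgroup.Normal.conj_mem ‹N.Normal› _ hx x⁻¹
        simpa [mul_assoc] using this
      simp [this]
    rw [hL] at h
    have he' : (e : ℂ) ≠ 0 := Nat.cast_ne_zero.mpr he.ne'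
    exact (mul_eq_zero.mp h.symm).resolve_left he'
end

section
/- Let U ≤ M be finite groups, ρ ∈ Irr(U), ξ ∈ Irr(M) and e a positive integer. If ρ^M = e·ξ and e² = |M : U|, then ξ_U = e·ρ and ξ vanishes on M ∖ U. -/
open scoped BigOperators Classical

section Aux

open Module LinearMap Set

theorem FR.conj_trace_eq {V : Type} [AddCommGroup V] [Module ℂ V] [FiniteDimensional ℂ V]
    (A B : Module.End ℂ V) (n : ℕ) (hn : 0 < n) (hA : A ^ n = 1)
    (hBA : B * A = 1) :
    starRingEnd ℂ (trace ℂ V A) = trace ℂ V B := by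
  classical
  have hss : A.IsFinitelySemisimple := by
    have h1 : Polynomial.aeval A ((Polynomial.X : Polynomial ℂ) ^ n - 1) = 0 := by
      simp [hA]
    have h2 : Squarefree ((Polynomial.X : Polynomial ℂ) ^ n - 1) := by
      have := Polynomial.X_pow_sub_one_separable_iff.mpr
        (by exact_mod_cast Nat.cast_ne_zero.mpr hn.ne' : (n : ℂ) ≠ 0)
      exact this.squarefree
    exact (Module.End.isSemisimple_of_squarefree_aeval_eq_zero h2 h1).isFinitelySemisimple
  have hpow : A ^ (n - 1) * A = 1 := by
    rw [← pow_succ, Nat.sub_add_cancel hn, hA]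
  have hB : B = A ^ (n - 1) := by
    have h2 : A * A ^ (n - 1) = 1 := by
      rw [(Commute.refl A).pow_right (n - 1), hpow]
    calc B = B * (A * A ^ (n - 1)) := by rw [h2, mul_one]
    _ = B * A * A ^ (n - 1) := by rw [mul_assoc]
    _ = A ^ (n - 1) := by rw [hBA, one_mul]
  have hcomm : Commute A B := hB ▸ (Commute.refl A).pow_right (n - 1)
  have hds := DirectSum.isInternal_submodule_of_iSupIndep_of_iSup_eq_top
    A.independent_maxGenEigenspace A.iSup_maxGenEigenspace_eq_top
  have h_fin : {μ : ℂ | A.maxGenEigenspace μ ≠ ⊥}.Finite :=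
    WellFoundedGT.finite_ne_bot_of_iSupIndep A.independent_maxGenEigenspace
  have hfA : ∀ μ : ℂ, MapsTo A (A.maxGenEigenspace μ) (A.maxGenEigenspace μ) :=
    fun μ => A.mapsTo_maxGenEigenspace_of_comm rfl μ
  have hfB : ∀ μ : ℂ, MapsTo B (A.maxGenEigenspace μ) (A.maxGenEigenspace μ) :=
    fun μ => A.mapsTo_maxGenEigenspace_of_comm hcomm μ
  have keyA : ∀ (μ : ℂ) (m : V), m ∈ A.maxGenEigenspace μ → A m = μ • m := fun μ m hm =>
    Module.End.apply_eq_of_mem_of_comm_of_isFinitelySemisimple_of_isNil hm rfl hss (by simp)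
  have hroot : ∀ μ : ℂ, A.maxGenEigenspace μ ≠ ⊥ → μ ^ n = 1 := by
    intro μ hne
    obtain ⟨m, hm, hm0⟩ := Submodule.exists_mem_ne_zero_of_ne_bot hne
    have hpowm : ∀ k : ℕ, (A ^ k) m = μ ^ k • m := by
      intro k
      induction k with
      | zero => simp
      | succ k ih =>
        rw [pow_succ, Module.End.mul_apply, keyA μ m hm, map_smul, ih, smul_smul, ← pow_succ']
    have := hpowm n
    rw [hA] at this
    simp only [Module.End.one_apply] at this
    have h3 : (μ ^ n - 1) • m = 0 := by rw [sub_smul, one_smul, ← this, sub_self]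
    rcases smul_eq_zero.mp h3 with h | h
    · exact sub_eq_zero.mp h
    · exact absurd h hm0
  have hresA : ∀ μ : ℂ, A.restrict (hfA μ) = μ • (1 : Module.End ℂ (A.maxGenEigenspace μ)) := by
    intro μ
    ext ⟨m, hm⟩
    simpa using (show ((A.restrict (hfA μ)) ⟨m, hm⟩ : V) = μ • m from keyA μ m hm)
  have hresB : ∀ μ : ℂ, μ ^ n = 1 →
      B.restrict (hfB μ) = μ⁻¹ • (1 : Module.End ℂ (A.maxGenEigenspace μ)) := by
    intro μ hμn
    have hμ0 : μ ≠ 0 := by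
      rintro rfl; simp [zero_pow hn.ne'] at hμn
    ext ⟨m, hm⟩
    have h1 : B (A m) = m := by
      have := LinearMap.congr_fun hBA m
      simpa [Module.End.mul_apply] using this
    rw [keyA μ m hm, map_smul] at h1
    have h2 : B m = μ⁻¹ • m := by
      calc B m = μ⁻¹ • (μ • B m) := by rw [smul_smul, inv_mul_cancel₀ hμ0, one_smul]
      _ = μ⁻¹ • m := by rw [h1]
    simpa using (show ((B.restrict (hfB μ)) ⟨m, hm⟩ : V) = μ⁻¹ • m from h2)
  have hconj : ∀ μ : ℂ, μ ^ n = 1 → starRingEnd ℂ μ = μ⁻¹ := by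
    intro μ hμn
    have h1 : Complex.normSq μ = 1 := by
      have h2 : Complex.normSq μ ^ n = 1 := by
        rw [← map_pow, hμn, map_one]
      have h3 : (0:ℝ) ≤ Complex.normSq μ := Complex.normSq_nonneg μ
      rcases lt_trichotomy (Complex.normSq μ) 1 with h | h | h
      · have := pow_lt_one₀ h3 h hn.ne'
        rw [h2] at this; exact absurd this (lt_irrefl 1)
      · exact h
      · have := one_lt_pow₀ h hn.ne'
        rw [h2] at this; exact absurd this (lt_irrefl 1)
    have h4 : starRingEnd ℂ μ * μ = 1 := by
      rw [mul_comm, Complex.mul_conj, h1, Complex.ofReal_one]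
    exact eq_inv_of_mul_eq_one_left h4
  rw [LinearMap.trace_eq_sum_trace_restrict' hds h_fin hfA,
    LinearMap.trace_eq_sum_trace_restrict' hds h_fin hfB, map_sum]
  refine Finset.sum_congr rfl fun μ hμ => ?_
  have hne : A.maxGenEigenspace μ ≠ ⊥ := (Set.Finite.mem_toFinset h_fin).mp hμ
  have hμn := hroot μ hne
  rw [hresA μ, hresB μ hμn, LinearMap.map_smul, LinearMap.map_smul, LinearMap.trace_one]
  simp [smul_eq_mul, hconj μ hμn]

theorem FR.conj_char {G : Type} [Group G] [Fintype G] (V : FDRep ℂ G) (g : G) :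
    starRingEnd ℂ (V.character g) = V.character g⁻¹ := by
  have hA : (V.ρ g) ^ (Fintype.card G) = 1 := by
    rw [← map_pow, pow_card_eq_one, map_one]
  have hBA : V.ρ g⁻¹ * V.ρ g = 1 := by
    rw [← map_mul, inv_mul_cancel, map_one]
  exact FR.conj_trace_eq (V.ρ g) (V.ρ g⁻¹) (Fintype.card G) Fintype.card_pos hA hBA

theorem FR.sum_char_mul_conj {G : Type} [Group G] [Fintype G] (V : FDRep ℂ G)
    [CategoryTheory.Simple V] :
    ∑ g : G, V.character g * starRingEnd ℂ (V.character g) = (Fintype.card G : ℂ) := by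
  have : Invertible ((Fintype.card G : ℂ)) :=
    invertibleOfNonzero (Nat.cast_ne_zero.mpr Fintype.card_pos.ne')
  have h := FDRep.char_orthonormal (k := ℂ) (G := G) V V
  rw [Nat.card_eq_fintype_card] at h
  rw [if_pos ⟨CategoryTheory.Iso.refl V⟩] at h
  have hcard : (Fintype.card G : ℂ) ≠ 0 := Nat.cast_ne_zero.mpr Fintype.card_pos.ne'
  have h2 : (Fintype.card G : ℂ)⁻¹ * ∑ g : G, V.character g * V.character g⁻¹ = 1 := by
    simpa [smul_eq_mul, invOf_eq_inv] using h
  have h3 : ∑ g : G, V.character g * starRingEnd ℂ (V.character g)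
      = ∑ g : G, V.character g * V.character g⁻¹ := by
    refine Finset.sum_congr rfl fun g _ => by rw [FR.conj_char]
  rw [h3]
  field_simp at h2 ⊢
  linear_combination h2

lemma FR.sum_dite_mem {M : Type} [Group M] [Fintype M] (U : Subgroup M) (f : U → ℂ) :
    ∑ x : M, (if h : x ∈ U then f ⟨x, h⟩ else 0) = ∑ u : U, f u := by
  classical
  rw [← Finset.sum_filter_add_sum_filter_not Finset.univ (fun x => x ∈ U)]
  rw [Finset.sum_eq_zero (fun x hx => dif_neg (Finset.mem_filter.mp hx).2), add_zero]
  rw [Finset.sum_subtype (p := fun x => x ∈ U) (Finset.univ.filter (fun x => x ∈ U)) (by simp)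
    (fun x => if h : x ∈ U then f ⟨x, h⟩ else 0)]
  exact Finset.sum_congr rfl fun u _ => dif_pos u.2

lemma FR.sum_filter_mem {M : Type} [Group M] [Fintype M] (U : Subgroup M) (g : M → ℂ) :
    ∑ x ∈ Finset.univ.filter (fun x => x ∈ U), g x = ∑ u : U, g u := by
  classical
  exact Finset.sum_subtype (p := fun x => x ∈ U) (Finset.univ.filter (fun x => x ∈ U)) (by simp) g

end Aux

/-- If `ρ ∈ Irr(U)`, `ξ ∈ Irr(M)`, `ρ^M = e·ξ` and `e² = |M : U|`, then `ξ_U = e·ρ`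
and `ξ` vanishes on `M ∖ U`. -/
theorem fully_ramified_restriction_and_vanishing (M : Type) [Group M] [Fintype M]
    (U : Subgroup M) (ρ : U → ℂ) (ξ : M → ℂ) (e : ℕ) (he : 0 < e)
    (hρ : IsIrrChar U ρ) (hξ : IsIrrChar M ξ)
    (hind : ∀ m : M, indChar U ρ m = (e : ℂ) * ξ m)
    (hsq : e ^ 2 = U.index) :
    (∀ u : U, ξ u = (e : ℂ) * ρ u) ∧ ∀ m : M, m ∉ U → ξ m = 0 := by
  classical
  obtain ⟨Vρ, hsρ, hρe⟩ := hρ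
  obtain ⟨Vξ, hsξ, hξe⟩ := hξ
  haveI := hsρ; haveI := hsξ
  have hcU : (Fintype.card U : ℂ) ≠ 0 := Nat.cast_ne_zero.mpr Fintype.card_pos.ne'
  have hcM : (Fintype.card M : ℂ) ≠ 0 := Nat.cast_ne_zero.mpr Fintype.card_pos.ne'
  have hSM : ∑ m : M, ξ m * starRingEnd ℂ (ξ m) = (Fintype.card M : ℂ) := by
    rw [hξe]; exact FR.sum_char_mul_conj Vξ
  have hSU : ∑ u : U, ρ u * starRingEnd ℂ (ρ u) = (Fintype.card U : ℂ) := by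
    rw [hρe]; exact FR.sum_char_mul_conj Vρ
  have hclass : ∀ x m : M, ξ (x * m * x⁻¹) = ξ m := by
    intro x m; rw [hξe]; exact FDRep.char_conj Vξ m x
  -- Frobenius-type computation
  have hinner : ∀ x : M,
      (∑ m : M, (if h : x * m * x⁻¹ ∈ U then ρ ⟨x * m * x⁻¹, h⟩ else 0) * starRingEnd ℂ (ξ m))
      = ∑ u : U, ρ u * starRingEnd ℂ (ξ u) := by
    intro x
    rw [← FR.sum_dite_mem U (fun u => ρ u * starRingEnd ℂ (ξ u))]
    refine Fintype.sum_equiv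
      ⟨fun m => x * m * x⁻¹, fun m => x⁻¹ * m * x, fun m => by group, fun m => by group⟩
      _ _ fun m => ?_
    simp only [Equiv.coe_fn_mk]
    rw [hclass x m]
    split_ifs <;> simp
  have hT : ∑ u : U, ρ u * starRingEnd ℂ (ξ u) = (e : ℂ) * (Fintype.card U : ℂ) := by
    have h0 : ∑ m : M, indChar U ρ m * starRingEnd ℂ (ξ m) = (e : ℂ) * (Fintype.card M : ℂ) := by
      rw [← hSM, Finset.mul_sum]
      exact Finset.sum_congr rfl fun m _ => by rw [hind m]; ring
    have h1 : ∑ m : M, indChar U ρ m * starRingEnd ℂ (ξ m)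
        = (Fintype.card U : ℂ)⁻¹ * (Fintype.card M : ℂ) *
          ∑ u : U, ρ u * starRingEnd ℂ (ξ u) := by
      simp only [indChar, Nat.card_eq_fintype_card]
      calc ∑ m : M, ((Fintype.card U : ℂ)⁻¹ *
              ∑ x : M, (if h : x * m * x⁻¹ ∈ U then ρ ⟨x * m * x⁻¹, h⟩ else 0))
              * starRingEnd ℂ (ξ m)
          = (Fintype.card U : ℂ)⁻¹ * ∑ m : M, ∑ x : M,
              (if h : x * m * x⁻¹ ∈ U then ρ ⟨x * m * x⁻¹, h⟩ else 0) * starRingEnd ℂ (ξ m) := by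
            rw [Finset.mul_sum]
            exact Finset.sum_congr rfl fun m _ => by rw [mul_assoc, Finset.sum_mul]
        _ = (Fintype.card U : ℂ)⁻¹ * ∑ x : M, ∑ m : M,
              (if h : x * m * x⁻¹ ∈ U then ρ ⟨x * m * x⁻¹, h⟩ else 0) * starRingEnd ℂ (ξ m) := by
            rw [Finset.sum_comm]
        _ = (Fintype.card U : ℂ)⁻¹ * ∑ x : M, (∑ u : U, ρ u * starRingEnd ℂ (ξ u)) := by
            rw [Finset.sum_congr rfl fun x _ => hinner x]
        _ = (Fintype.card U : ℂ)⁻¹ * (Fintype.card M : ℂ) *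
              ∑ u : U, ρ u * starRingEnd ℂ (ξ u) := by
            rw [Finset.sum_const, nsmul_eq_mul, Finset.card_univ]; ring
    rw [h0] at h1
    have h2 : (Fintype.card U : ℂ) * ((e : ℂ) * (Fintype.card M : ℂ))
        = (Fintype.card U : ℂ) * ((Fintype.card U : ℂ)⁻¹ * (Fintype.card M : ℂ) *
          ∑ u : U, ρ u * starRingEnd ℂ (ξ u)) := by rw [h1]
    rw [show (Fintype.card U : ℂ) * ((Fintype.card U : ℂ)⁻¹ * (Fintype.card M : ℂ) *
          ∑ u : U, ρ u * starRingEnd ℂ (ξ u))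
        = ((Fintype.card U : ℂ) * (Fintype.card U : ℂ)⁻¹) * ((Fintype.card M : ℂ) *
          ∑ u : U, ρ u * starRingEnd ℂ (ξ u)) from by ring,
      mul_inv_cancel₀ hcU, one_mul] at h2
    apply mul_left_cancel₀ hcM
    linear_combination -h2
  have hT' : ∑ u : U, ξ u * starRingEnd ℂ (ρ u) = (e : ℂ) * (Fintype.card U : ℂ) := by
    have h := congrArg (starRingEnd ℂ) hT
    rw [map_sum] at h
    simp only [map_mul, Complex.conj_conj, map_natCast] at h
    rw [← h]
    exact Finset.sum_congr rfl fun u _ => by ring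
  have hcard : (Fintype.card M : ℂ) = (e : ℂ) ^ 2 * (Fintype.card U : ℂ) := by
    have h := Subgroup.index_mul_card U
    rw [← hsq] at h
    rw [Nat.card_eq_fintype_card, Nat.card_eq_fintype_card] at h
    exact_mod_cast congrArg (fun n : ℕ => (n : ℂ)) h.symm
  set X := ∑ u : U, ξ u * starRingEnd ℂ (ξ u) with hX
  have E1 : (∑ u : U, (Complex.normSq (ξ u - (e : ℂ) * ρ u) : ℂ))
      = X - (e : ℂ) ^ 2 * (Fintype.card U : ℂ) := by
    have expand : ∀ u : U, (Complex.normSq (ξ u - (e : ℂ) * ρ u) : ℂ)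
        = ξ u * starRingEnd ℂ (ξ u) - (e : ℂ) * (ξ u * starRingEnd ℂ (ρ u))
          - (e : ℂ) * (ρ u * starRingEnd ℂ (ξ u))
          + (e : ℂ) ^ 2 * (ρ u * starRingEnd ℂ (ρ u)) := by
      intro u
      rw [← Complex.mul_conj, map_sub, map_mul, map_natCast]
      ring
    rw [Finset.sum_congr rfl fun u _ => expand u]
    simp only [Finset.sum_add_distrib, Finset.sum_sub_distrib, ← Finset.mul_sum]
    rw [hT, hT', hSU, ← hX]
    ring
  have E2 : X + (∑ m ∈ Finset.univ.filter (fun m => m ∉ U), ξ m * starRingEnd ℂ (ξ m))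
      = (e : ℂ) ^ 2 * (Fintype.card U : ℂ) := by
    have hsplit := Finset.sum_filter_add_sum_filter_not Finset.univ (fun m => m ∈ U)
      (fun m => ξ m * starRingEnd ℂ (ξ m))
    rw [FR.sum_filter_mem U (fun m => ξ m * starRingEnd ℂ (ξ m))] at hsplit
    rw [hSM] at hsplit
    exact hsplit.trans hcard
  have h2 : ∑ m ∈ Finset.univ.filter (fun m => m ∉ U), (Complex.normSq (ξ m) : ℂ)
      = ∑ m ∈ Finset.univ.filter (fun m => m ∉ U), ξ m * starRingEnd ℂ (ξ m) :=
    Finset.sum_congr rfl fun m _ => (Complex.mul_conj (ξ m)).symm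
  have key : ((∑ u : U, Complex.normSq (ξ u - (e : ℂ) * ρ u)
      + ∑ m ∈ Finset.univ.filter (fun m => m ∉ U), Complex.normSq (ξ m) : ℝ) : ℂ) = 0 := by
    rw [Complex.ofReal_add, Complex.ofReal_sum, Complex.ofReal_sum, h2]
    linear_combination E1 + E2
  have hreal : ∑ u : U, Complex.normSq (ξ u - (e : ℂ) * ρ u)
      + ∑ m ∈ Finset.univ.filter (fun m => m ∉ U), Complex.normSq (ξ m) = 0 := by
    exact_mod_cast key
  have hPn : (0:ℝ) ≤ ∑ u : U, Complex.normSq (ξ u - (e : ℂ) * ρ u) :=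
    Finset.sum_nonneg fun _ _ => Complex.normSq_nonneg _
  have hQn : (0:ℝ) ≤ ∑ m ∈ Finset.univ.filter (fun m => m ∉ U), Complex.normSq (ξ m) :=
    Finset.sum_nonneg fun _ _ => Complex.normSq_nonneg _
  have hP0 : ∑ u : U, Complex.normSq (ξ u - (e : ℂ) * ρ u) = 0 := le_antisymm (by linarith) hPn
  have hQ0 : ∑ m ∈ Finset.univ.filter (fun m => m ∉ U), Complex.normSq (ξ m) = 0 := le_antisymm
    (by linarith) hQn
  constructor
  · intro u
    have h3 := (Finset.sum_eq_zero_iff_of_nonneg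
      (fun (v : U) _ => Complex.normSq_nonneg (ξ v - (e : ℂ) * ρ v))).mp hP0 u (Finset.mem_univ u)
    exact sub_eq_zero.mp (Complex.normSq_eq_zero.mp h3)
  · intro m hm
    have h3 := (Finset.sum_eq_zero_iff_of_nonneg
      (fun v _ => Complex.normSq_nonneg (ξ v))).mp hQ0 m
      (Finset.mem_filter.mpr ⟨Finset.mem_univ m, hm⟩)
    exact Complex.normSq_eq_zero.mp h3
end
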